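/- The function α₁ is a strictly increasing, strictly concave C¹ function on (1,+∞), its derivative is given by α₁'(e) = 2√2 ∫₀^{π} (e + cos θ)^{-1/2} dθ, and α₁(e) ~ 4π√(2e), α₁'(e) ~ 2π√(2/e) as e → +∞. -/

import Mathlib

/-!
For `e > 1` we have `arccos (-e) = π`, so `α₁ e = 4√2 ∫₀^π √(e + cos θ)`. The integrand stays in a
compact subset of `(0, ∞)` for parameters near `e`, so one may differentiate under the integral
sign: `α₁' = 2√2 ∫₀^π (e + cos θ)^{-1/2}`, which is positive, continuous and strictly decreasing.
This gives monotonicity, strict concavity and the `C¹` property. For the asymptotics, both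
integrands are squeezed between their values at `e - 1` and `e + 1`, whose ratios to `√e` (or
`1 / √e`) tend to `1`.
-/

open Real Set Filter

noncomputable def theta1 (e : ℝ) : ℝ := Real.arccos (-e)

noncomputable def alpha1 (e : ℝ) : ℝ :=
  4 * Real.sqrt 2 * ∫ θ in (0:ℝ)..(theta1 e), Real.sqrt (e + Real.cos θ)

noncomputable def dalpha1 (e : ℝ) : ℝ :=
  2 * Real.sqrt 2 * ∫ θ in (0:ℝ)..(theta1 e), 1 / Real.sqrt (e + Real.cos θ)

section IntegralCompAddCos

variable {f f' : ℝ → ℝ} {a b e : ℝ}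

lemma add_cos_pos (he : 1 < e) (θ : ℝ) : 0 < e + cos θ := by
  linarith [neg_one_le_cos θ]

lemma continuous_comp_add_cos (hf : ContinuousOn f (Ioi 0)) (he : 1 < e) :
    Continuous fun θ => f (e + cos θ) :=
  hf.comp_continuous (by fun_prop) (add_cos_pos he)

lemma continuousOn_integral_comp_add_cos (hf : ContinuousOn f (Ioi 0)) :
    ContinuousOn (fun x => ∫ θ in a..b, f (x + cos θ)) (Ioi 1) := by
  intro e (he : 1 < e)
  obtain ⟨m, hm, hme⟩ := exists_between he
  -- clamping the parameter at `m` makes the integrand jointly continuous on all of `ℝ × ℝ`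
  have hcont : Continuous (Function.uncurry fun x θ => f (max x m + cos θ)) :=
    hf.comp_continuous (by fun_prop) fun p => add_cos_pos (hm.trans_le (le_max_right _ _)) _
  refine ((intervalIntegral.continuous_parametric_intervalIntegral_of_continuous'
    (μ := MeasureTheory.volume) hcont a b
    ).continuousAt.congr ?_).continuousWithinAt
  filter_upwards [Ioi_mem_nhds hme] with x (hx : m < x)
  simp only [max_eq_left hx.le]

lemma hasDerivAt_integral_comp_add_cos (hf : ∀ x ∈ Ioi 0, HasDerivAt f (f' x) x)
    (hf' : ContinuousOn f' (Ioi 0)) (he : 1 < e) :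
    HasDerivAt (fun x => ∫ θ in a..b, f (x + cos θ)) (∫ θ in a..b, f' (e + cos θ)) e := by
  set δ := (e - 1) / 2 with hδ_def
  have hδ : 0 < δ := by linarith
  have hK : Icc δ (e + 1 + δ) ⊆ Ioi 0 := fun x hx => hδ.trans_le hx.1
  obtain ⟨C, hC⟩ := isCompact_Icc.exists_bound_of_continuousOn (hf'.mono hK)
  have h_mem : ∀ x ∈ Metric.ball e δ, ∀ θ, x + cos θ ∈ Icc δ (e + 1 + δ) := by
    intro x hx θ
    have := abs_lt.1 (Metric.mem_ball.1 hx)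
    constructor <;> linarith [neg_one_le_cos θ, cos_le_one θ]
  have h_pos : ∀ x ∈ Metric.ball e δ, 1 < x := by
    intro x hx
    linarith [(abs_lt.1 (Metric.mem_ball.1 hx)).1]
  have hf_cont : ContinuousOn f (Ioi 0) := fun x hx => (hf x hx).continuousAt.continuousWithinAt
  refine (intervalIntegral.hasDerivAt_integral_of_dominated_loc_of_deriv_le
    (bound := fun _ => C) (Metric.ball_mem_nhds e hδ) ?_
    ((continuous_comp_add_cos hf_cont he).intervalIntegrable a b)
    (continuous_comp_add_cos hf' he).aestronglyMeasurable
    (.of_forall fun θ _ x hx => hC _ (h_mem x hx θ)) intervalIntegrable_const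
    (.of_forall fun θ _ x hx => ?_)).2
  · filter_upwards [Metric.ball_mem_nhds e hδ] with x hx
    exact (continuous_comp_add_cos hf_cont (h_pos x hx)).aestronglyMeasurable
  · exact (hf _ (hK (h_mem x hx θ))).comp_add_const x (cos θ)

lemma strictAntiOn_integral_comp_add_cos (hf : StrictAntiOn f (Ioi 0))
    (hf_cont : ContinuousOn f (Ioi 0)) (hab : a < b) :
    StrictAntiOn (fun x => ∫ θ in a..b, f (x + cos θ)) (Ioi 1) := by
  intro x (hx : 1 < x) y (hy : 1 < y) hxy
  have h_lt : ∀ θ, f (y + cos θ) < f (x + cos θ) := fun θ =>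
    hf (add_cos_pos hx θ) (add_cos_pos hy θ) (by linarith)
  exact intervalIntegral.integral_lt_integral_of_continuousOn_of_le_of_exists_lt hab
    (continuous_comp_add_cos hf_cont hy).continuousOn
    (continuous_comp_add_cos hf_cont hx).continuousOn
    (fun θ _ => (h_lt θ).le) ⟨a, left_mem_Icc.2 hab.le, h_lt a⟩

lemma integral_comp_add_cos_mem_Icc {m M : ℝ} (hf : ContinuousOn f (Icc (e - 1) (e + 1)))
    (h_bound : ∀ x ∈ Icc (e - 1) (e + 1), f x ∈ Icc m M) (hab : a ≤ b) :
    ∫ θ in a..b, f (e + cos θ) ∈ Icc ((b - a) * m) ((b - a) * M) := by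
  have h_mem : ∀ θ, e + cos θ ∈ Icc (e - 1) (e + 1) := fun θ =>
    ⟨by linarith [neg_one_le_cos θ], by linarith [cos_le_one θ]⟩
  have h_int : IntervalIntegrable (fun θ => f (e + cos θ)) MeasureTheory.volume a b :=
    (hf.comp_continuous (by fun_prop) h_mem).intervalIntegrable a b
  constructor
  · simpa using intervalIntegral.integral_mono_on hab intervalIntegrable_const h_int
      fun θ _ => (h_bound _ (h_mem θ)).1
  · simpa using intervalIntegral.integral_mono_on hab h_int intervalIntegrable_const
      fun θ _ => (h_bound _ (h_mem θ)).2

end IntegralCompAddCos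

lemma tendsto_sqrt_add_div_sqrt (c : ℝ) : Tendsto (fun x => √(x + c) / √x) atTop (nhds 1) := by
  have h : Tendsto (fun x => √(1 + c / x)) atTop (nhds 1) := by
    simpa using ((tendsto_const_nhds.div_atTop tendsto_id).const_add 1).sqrt
  refine h.congr' ?_
  filter_upwards [eventually_gt_atTop 0] with x hx
  rw [← sqrt_div' _ hx.le, add_div, div_self hx.ne']

lemma theta1_eq_pi {e : ℝ} (he : 1 ≤ e) : theta1 e = π :=
  arccos_eq_pi.2 (by linarith)

lemma alpha1_eq {e : ℝ} (he : 1 ≤ e) :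
    alpha1 e = 4 * √2 * ∫ θ in (0:ℝ)..π, √(e + cos θ) := by
  rw [alpha1, theta1_eq_pi he]

lemma dalpha1_eq {e : ℝ} (he : 1 ≤ e) :
    dalpha1 e = 2 * √2 * ∫ θ in (0:ℝ)..π, 1 / √(e + cos θ) := by
  rw [dalpha1, theta1_eq_pi he]

lemma continuousOn_one_div_sqrt : ContinuousOn (fun x => 1 / √x) (Ioi 0) :=
  continuousOn_const.div (by fun_prop) fun _ hx => (sqrt_pos.2 hx).ne'

lemma hasDerivAt_alpha1 {e : ℝ} (he : 1 < e) : HasDerivAt alpha1 (dalpha1 e) e := by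
  have h := (hasDerivAt_integral_comp_add_cos (a := 0) (b := π)
    (fun x (hx : 0 < x) => hasDerivAt_sqrt hx.ne')
    (continuousOn_const.div (by fun_prop) fun _ hx => (mul_pos two_pos (sqrt_pos.2 hx)).ne')
    he).const_mul (4 * √2)
  have h_eq : alpha1 =ᶠ[nhds e] fun x => 4 * √2 * ∫ θ in (0:ℝ)..π, √(x + cos θ) := by
    filter_upwards [Ioi_mem_nhds he] with x (hx : 1 < x)
    exact alpha1_eq hx.le
  have h_val : 4 * √2 * ∫ θ in (0:ℝ)..π, 1 / (2 * √(e + cos θ)) = dalpha1 e := by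
    simp_rw [dalpha1_eq he.le, mul_comm (2:ℝ) (√_), ← div_div, intervalIntegral.integral_div]
    ring
  exact h_val ▸ h.congr_of_eventuallyEq h_eq

lemma deriv_alpha1 {e : ℝ} (he : 1 < e) : deriv alpha1 e = dalpha1 e :=
  (hasDerivAt_alpha1 he).deriv

lemma continuousOn_alpha1 : ContinuousOn alpha1 (Ioi 1) := fun _ he =>
  (hasDerivAt_alpha1 he).continuousAt.continuousWithinAt

lemma continuousOn_dalpha1 : ContinuousOn dalpha1 (Ioi 1) :=
  (continuousOn_const.mul (continuousOn_integral_comp_add_cos continuousOn_one_div_sqrt)).congr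
    fun _ he => dalpha1_eq (le_of_lt he)

lemma dalpha1_pos {e : ℝ} (he : 1 < e) : 0 < dalpha1 e := by
  rw [dalpha1_eq he.le]
  have h_int : 0 < ∫ θ in (0:ℝ)..π, 1 / √(e + cos θ) :=
    intervalIntegral.intervalIntegral_pos_of_pos_on
      ((continuous_comp_add_cos continuousOn_one_div_sqrt he).intervalIntegrable 0 π)
      (fun θ _ => one_div_pos.2 (sqrt_pos.2 (add_cos_pos he θ))) pi_pos
  positivity

lemma strictAntiOn_dalpha1 : StrictAntiOn dalpha1 (Ioi 1) := by
  intro x (hx : 1 < x) y (hy : 1 < y) hxy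
  have h_anti : StrictAntiOn (fun x => 1 / √x) (Ioi 0) := fun x (hx : 0 < x) y _ hxy =>
    one_div_lt_one_div_of_lt (sqrt_pos.2 hx) (sqrt_lt_sqrt hx.le hxy)
  rw [dalpha1_eq hx.le, dalpha1_eq hy.le]
  gcongr ?_ * ?_
  exact strictAntiOn_integral_comp_add_cos h_anti continuousOn_one_div_sqrt pi_pos hx hy hxy

lemma tendsto_integral_sqrt_add_cos_div :
    Tendsto (fun e => (∫ θ in (0:ℝ)..π, √(e + cos θ)) / π / √e) atTop (nhds 1) := by
  have h_bounds : ∀ᶠ e in atTop, √(e - 1) ≤ (∫ θ in (0:ℝ)..π, √(e + cos θ)) / π ∧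
      (∫ θ in (0:ℝ)..π, √(e + cos θ)) / π ≤ √(e + 1) := by
    filter_upwards [eventually_gt_atTop 1] with e he
    obtain ⟨h_lower, h_upper⟩ := integral_comp_add_cos_mem_Icc (a := 0) (b := π)
      continuous_sqrt.continuousOn (fun x hx => ⟨sqrt_le_sqrt hx.1, sqrt_le_sqrt hx.2⟩) pi_pos.le
    rw [sub_zero] at h_lower h_upper
    exact ⟨(le_div_iff₀' pi_pos).2 h_lower, (div_le_iff₀' pi_pos).2 h_upper⟩
  refine tendsto_of_tendsto_of_tendsto_of_le_of_le' (tendsto_sqrt_add_div_sqrt (-1))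
    (tendsto_sqrt_add_div_sqrt 1) ?_ ?_
  · filter_upwards [h_bounds] with e h
    rw [← sub_eq_add_neg]
    gcongr
    exact h.1
  · filter_upwards [h_bounds] with e h
    gcongr
    exact h.2

lemma tendsto_integral_one_div_sqrt_add_cos_mul :
    Tendsto (fun e => (∫ θ in (0:ℝ)..π, 1 / √(e + cos θ)) / π * √e) atTop (nhds 1) := by
  have h_bounds : ∀ᶠ e in atTop, 1 / √(e + 1) ≤ (∫ θ in (0:ℝ)..π, 1 / √(e + cos θ)) / π ∧
      (∫ θ in (0:ℝ)..π, 1 / √(e + cos θ)) / π ≤ 1 / √(e - 1) := by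
    filter_upwards [eventually_gt_atTop 1] with e he
    have h_pos : ∀ x ∈ Icc (e - 1) (e + 1), 0 < x := fun x hx => by linarith [hx.1]
    obtain ⟨h_lower, h_upper⟩ := integral_comp_add_cos_mem_Icc (a := 0) (b := π)
      (continuousOn_one_div_sqrt.mono h_pos)
      (fun x hx => ⟨one_div_le_one_div_of_le (sqrt_pos.2 (h_pos x hx)) (sqrt_le_sqrt hx.2),
        one_div_le_one_div_of_le (sqrt_pos.2 (by linarith)) (sqrt_le_sqrt hx.1)⟩) pi_pos.le
    rw [sub_zero] at h_lower h_upper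
    exact ⟨(le_div_iff₀' pi_pos).2 h_lower, (div_le_iff₀' pi_pos).2 h_upper⟩
  have h_lim (c : ℝ) : Tendsto (fun e => 1 / √(e + c) * √e) atTop (nhds 1) := by
    have h_eq : (fun e => 1 / √(e + c) * √e) = fun e => (√(e + c) / √e)⁻¹ := by
      ext e
      rw [inv_div, one_div_mul_eq_div]
    rw [h_eq, ← inv_one]
    exact (tendsto_sqrt_add_div_sqrt c).inv₀ one_ne_zero
  refine tendsto_of_tendsto_of_tendsto_of_le_of_le' (h_lim 1) (h_lim (-1)) ?_ ?_
  · filter_upwards [h_bounds] with e h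
    exact mul_le_mul_of_nonneg_right h.1 (sqrt_nonneg e)
  · filter_upwards [h_bounds] with e h
    rw [← sub_eq_add_neg]
    exact mul_le_mul_of_nonneg_right h.2 (sqrt_nonneg e)

/-- α₁ is strictly increasing, strictly concave and C¹ on (1,∞), its
derivative is 2√2 ∫₀^π (e + cos θ)^{-1/2} dθ there, and α₁(e) ~ 4π√(2e),
α₁'(e) ~ 2π√(2/e) as e → +∞. -/
theorem alpha1_concave_right :
    StrictMonoOn alpha1 (Set.Ioi (1:ℝ)) ∧
    StrictConcaveOn ℝ (Set.Ioi (1:ℝ)) alpha1 ∧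
    ContDiffOn ℝ 1 alpha1 (Set.Ioi (1:ℝ)) ∧
    (∀ e ∈ Set.Ioi (1:ℝ), HasDerivAt alpha1
        (2 * Real.sqrt 2 * ∫ θ in (0:ℝ)..π, 1 / Real.sqrt (e + Real.cos θ)) e) ∧
    Tendsto (fun e => alpha1 e / (4 * π * Real.sqrt (2 * e))) atTop (nhds 1) ∧
    Tendsto (fun e => dalpha1 e / (2 * π * Real.sqrt (2 / e))) atTop (nhds 1) := by
  refine ⟨?_, ?_, ?_, fun e he => dalpha1_eq (le_of_lt he) ▸ hasDerivAt_alpha1 he,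
    tendsto_integral_sqrt_add_cos_div.congr' ?_,
    tendsto_integral_one_div_sqrt_add_cos_mul.congr' ?_⟩
  · refine strictMonoOn_of_deriv_pos (convex_Ioi 1) continuousOn_alpha1 fun e he => ?_
    rw [interior_Ioi] at he
    exact deriv_alpha1 he ▸ dalpha1_pos he
  · refine StrictAntiOn.strictConcaveOn_of_deriv (convex_Ioi 1) continuousOn_alpha1 ?_
    rw [interior_Ioi]
    intro x hx y hy hxy
    rw [deriv_alpha1 hx, deriv_alpha1 hy]
    exact strictAntiOn_dalpha1 hx hy hxy
  · rw [show (1 : WithTop ℕ∞) = 0 + 1 from rfl, contDiffOn_succ_iff_deriv_of_isOpen isOpen_Ioi]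
    refine ⟨fun e he => (hasDerivAt_alpha1 he).differentiableAt.differentiableWithinAt,
      by simp, contDiffOn_zero.2 (continuousOn_dalpha1.congr fun e he => deriv_alpha1 he)⟩
  · filter_upwards [eventually_gt_atTop 1] with e he
    rw [alpha1_eq he.le, sqrt_mul zero_le_two]
    field_simp
  · filter_upwards [eventually_gt_atTop 1] with e he
    rw [dalpha1_eq he.le, sqrt_div zero_le_two]
    field_simp
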